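/- Let A, B be bounded linear operators on H. Then ‖A + B‖_ber² ≤ ‖A‖_ber² + ‖B‖_ber² + ber(A*A)^{1/2}·ber(B*B)^{1/2} + ber(A*B); moreover ‖A + B‖_ber² ≤ ‖A‖_ber² + ‖B‖_ber² + (1/2)·ber(A*A + B*B) + ber(A*B), and ‖A + B‖_ber² ≤ ‖A‖_ber² + ‖B‖_ber² + (1/2)·ber(AA* + BB*) + ber(AB*). -/

import Mathlib

set_option synthInstance.maxHeartbeats 1000000
set_option maxHeartbeats 1000000

open scoped NNReal
open ContinuousLinearMap

/-- The Berezin number of an operator `T`, relative to the family `k` of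
(normalized reproducing kernel) vectors indexed by `Ω`. -/
noncomputable def ber {H : Type*} [NormedAddCommGroup H] [InnerProductSpace ℂ H]
    {Ω : Type*} (k : Ω → H) (T : H →L[ℂ] H) : ℝ :=
  ⨆ lam : Ω, ‖(inner ℂ (T (k lam)) (k lam) : ℂ)‖

/-- The absolute value `|T| = (T*T)^(1/2)` of a bounded operator. -/
noncomputable def opAbs {H : Type*} [NormedAddCommGroup H] [InnerProductSpace ℂ H]
    [CompleteSpace H] (T : H →L[ℂ] H) : H →L[ℂ] H :=
  CFC.sqrt (adjoint T * T)

/-- The Berezin norm of an operator. -/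
noncomputable def berNorm {H : Type*} [NormedAddCommGroup H] [InnerProductSpace ℂ H]
    {Ω : Type*} (k : Ω → H) (T : H →L[ℂ] H) : ℝ :=
  ⨆ p : Ω × Ω, ‖(inner ℂ (T (k p.1)) (k p.2) : ℂ)‖

/-!
Fix `x = k̂_λ` and `y = k̂_μ`, and put `a = |⟨Ax, y⟩|`, `b = |⟨Bx, y⟩|`. Then
`|⟨(A + B)x, y⟩|² ≤ a² + b² + 2ab`, and Buzano's inequality for the unit vector `y` gives
`2ab = 2|⟨Ax, y⟩⟨y, Bx⟩| ≤ ‖Ax‖‖Bx‖ + |⟨Ax, Bx⟩|`, where `|⟨Ax, Bx⟩| = |⟨A*B x, x⟩| ≤ ber(A*B)`.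
The three inequalities come from three bounds on `‖Ax‖‖Bx‖`: `‖Ax‖² = ⟨A*A x, x⟩` bounds it by
`ber(A*A)^{1/2} ber(B*B)^{1/2}`, AM–GM bounds it by `½ ber(A*A + B*B)`, and the last inequality
is the second one for `A*`, `B*`, since `‖T*‖_ber = ‖T‖_ber`.
-/

open scoped InnerProductSpace

section Buzano

variable {𝕜 E : Type*} [RCLike 𝕜] [NormedAddCommGroup E] [InnerProductSpace 𝕜 E]

/-- `2⟪e, v⟫e - v` is the reflection of `v` in the line spanned by the unit vector `e`. -/
theorem norm_two_inner_smul_sub {e : E} (he : ‖e‖ = 1) (v : E) :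
    ‖(2 * ⟪e, v⟫_𝕜) • e - v‖ = ‖v‖ := by
  have hre : RCLike.re ⟪(2 * ⟪e, v⟫_𝕜) • e, v⟫_𝕜 = 2 * ‖⟪e, v⟫_𝕜‖ ^ 2 := by
    rw [inner_smul_left, map_mul (starRingEnd 𝕜), map_ofNat (starRingEnd 𝕜), mul_assoc,
      RCLike.conj_mul]
    norm_cast
  have hsq : ‖(2 * ⟪e, v⟫_𝕜) • e - v‖ ^ 2 = ‖v‖ ^ 2 := by
    rw [@norm_sub_sq 𝕜, hre, norm_smul, he, norm_mul, RCLike.norm_ofNat]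
    ring
  exact (sq_eq_sq₀ (norm_nonneg _) (norm_nonneg _)).mp hsq

/-- Buzano's inequality. -/
theorem norm_inner_mul_inner_le {e : E} (he : ‖e‖ = 1) (u v : E) :
    ‖⟪u, e⟫_𝕜 * ⟪e, v⟫_𝕜‖ ≤ (‖u‖ * ‖v‖ + ‖⟪u, v⟫_𝕜‖) / 2 := by
  have hsplit : 2 * (⟪u, e⟫_𝕜 * ⟪e, v⟫_𝕜) = ⟪u, v⟫_𝕜 + ⟪u, (2 * ⟪e, v⟫_𝕜) • e - v⟫_𝕜 := by
    rw [inner_sub_right, inner_smul_right]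
    ring
  have h2 : ‖(2 : 𝕜) * (⟪u, e⟫_𝕜 * ⟪e, v⟫_𝕜)‖ ≤ ‖⟪u, v⟫_𝕜‖ + ‖u‖ * ‖v‖ :=
    calc ‖(2 : 𝕜) * (⟪u, e⟫_𝕜 * ⟪e, v⟫_𝕜)‖
        ≤ ‖⟪u, v⟫_𝕜‖ + ‖⟪u, (2 * ⟪e, v⟫_𝕜) • e - v⟫_𝕜‖ := hsplit ▸ norm_add_le _ _
      _ ≤ ‖⟪u, v⟫_𝕜‖ + ‖u‖ * ‖v‖ := by
        grw [norm_inner_le_norm u ((2 * ⟪e, v⟫_𝕜) • e - v), norm_two_inner_smul_sub he]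
  rw [norm_mul, RCLike.norm_ofNat] at h2
  linarith

end Buzano

section Berezin

variable {H : Type*} [NormedAddCommGroup H] [InnerProductSpace ℂ H] {Ω : Type*} (k : Ω → H)

theorem ber_nonneg (T : H →L[ℂ] H) : 0 ≤ ber k T :=
  Real.iSup_nonneg fun _ => norm_nonneg _

theorem berNorm_nonneg (T : H →L[ℂ] H) : 0 ≤ berNorm k T :=
  Real.iSup_nonneg fun _ => norm_nonneg _

theorem berNorm_le {T : H →L[ℂ] H} {c : ℝ} (h : ∀ lam mu, ‖⟪T (k lam), k mu⟫_ℂ‖ ≤ c)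
    (hc : 0 ≤ c) : berNorm k T ≤ c :=
  Real.iSup_le (fun p => h p.1 p.2) hc

variable {k} (hk : ∀ lam, ‖k lam‖ = 1)
include hk

theorem norm_inner_apply_le_opNorm (T : H →L[ℂ] H) (lam mu : Ω) :
    ‖⟪T (k lam), k mu⟫_ℂ‖ ≤ ‖T‖ :=
  calc ‖⟪T (k lam), k mu⟫_ℂ‖ ≤ ‖T (k lam)‖ * ‖k mu‖ := norm_inner_le_norm _ _
    _ ≤ ‖T‖ * ‖k lam‖ * ‖k mu‖ := by grw [T.le_opNorm]
    _ = ‖T‖ := by rw [hk, hk, mul_one, mul_one]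

theorem norm_inner_le_berNorm (T : H →L[ℂ] H) (lam mu : Ω) :
    ‖⟪T (k lam), k mu⟫_ℂ‖ ≤ berNorm k T :=
  le_ciSup (f := fun p : Ω × Ω => ‖⟪T (k p.1), k p.2⟫_ℂ‖)
    ⟨‖T‖, Set.forall_mem_range.2 fun p => norm_inner_apply_le_opNorm hk T p.1 p.2⟩ (lam, mu)

theorem norm_inner_le_ber (T : H →L[ℂ] H) (lam : Ω) :
    ‖⟪T (k lam), k lam⟫_ℂ‖ ≤ ber k T :=
  le_ciSup (f := fun l => ‖⟪T (k l), k l⟫_ℂ‖)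
    ⟨‖T‖, Set.forall_mem_range.2 fun l => norm_inner_apply_le_opNorm hk T l l⟩ lam

theorem re_inner_le_ber (T : H →L[ℂ] H) (lam : Ω) :
    RCLike.re ⟪T (k lam), k lam⟫_ℂ ≤ ber k T :=
  (RCLike.re_le_norm _).trans (norm_inner_le_ber hk T lam)

variable [CompleteSpace H]

theorem norm_apply_sq_le_ber (A : H →L[ℂ] H) (lam : Ω) :
    ‖A (k lam)‖ ^ 2 ≤ ber k (adjoint A * A) :=
  (apply_norm_sq_eq_inner_adjoint_left A (k lam)).trans_le (re_inner_le_ber hk _ lam)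

theorem norm_apply_sq_add_norm_apply_sq_le_ber (A B : H →L[ℂ] H) (lam : Ω) :
    ‖A (k lam)‖ ^ 2 + ‖B (k lam)‖ ^ 2 ≤ ber k (adjoint A * A + adjoint B * B) := by
  refine le_of_eq_of_le ?_ (re_inner_le_ber hk _ lam)
  rw [apply_norm_sq_eq_inner_adjoint_left, apply_norm_sq_eq_inner_adjoint_left, add_apply,
    inner_add_left, map_add, mul_def, mul_def]

theorem norm_inner_apply_apply_le_ber (A B : H →L[ℂ] H) (lam : Ω) :
    ‖⟪A (k lam), B (k lam)⟫_ℂ‖ ≤ ber k (adjoint A * B) := by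
  rw [← norm_inner_symm, ← adjoint_inner_left]
  exact norm_inner_le_ber hk (adjoint A * B) lam

theorem berNorm_adjoint (T : H →L[ℂ] H) : berNorm k (adjoint T) = berNorm k T := by
  have key (S : H →L[ℂ] H) : berNorm k (adjoint S) ≤ berNorm k S :=
    berNorm_le k (fun lam mu => by
      rw [adjoint_inner_left, norm_inner_symm]
      exact norm_inner_le_berNorm hk S mu lam) (berNorm_nonneg k S)
  exact (key T).antisymm (by simpa only [adjoint_adjoint] using key (adjoint T))

theorem norm_inner_add_apply_sq_le (A B : H →L[ℂ] H) (lam mu : Ω) :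
    ‖⟪(A + B) (k lam), k mu⟫_ℂ‖ ^ 2 ≤
      berNorm k A ^ 2 + berNorm k B ^ 2 + ‖A (k lam)‖ * ‖B (k lam)‖ + ber k (adjoint A * B) := by
  set a := ‖⟪A (k lam), k mu⟫_ℂ‖
  set b := ‖⟪B (k lam), k mu⟫_ℂ‖
  have hab : ‖⟪(A + B) (k lam), k mu⟫_ℂ‖ ≤ a + b := by
    rw [add_apply, inner_add_left]
    exact norm_add_le _ _
  have hbuzano : a * b ≤ (‖A (k lam)‖ * ‖B (k lam)‖ + ‖⟪A (k lam), B (k lam)⟫_ℂ‖) / 2 := by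
    simpa only [norm_mul, norm_inner_symm (𝕜 := ℂ) (k mu)] using
      norm_inner_mul_inner_le (𝕜 := ℂ) (hk mu) (A (k lam)) (B (k lam))
  have ha : a ≤ berNorm k A := norm_inner_le_berNorm hk A lam mu
  have hb : b ≤ berNorm k B := norm_inner_le_berNorm hk B lam mu
  have hAB := norm_inner_apply_apply_le_ber hk A B lam
  have ha0 : 0 ≤ a := norm_nonneg _
  have hb0 : 0 ≤ b := norm_nonneg _
  grw [hab]
  nlinarith

theorem berNorm_add_sq_le_of_norm_mul_le (A B : H →L[ℂ] H) {c : ℝ} (hc : 0 ≤ c)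
    (h : ∀ lam, ‖A (k lam)‖ * ‖B (k lam)‖ ≤ c) :
    berNorm k (A + B) ^ 2 ≤ berNorm k A ^ 2 + berNorm k B ^ 2 + c + ber k (adjoint A * B) := by
  have hR : 0 ≤ berNorm k A ^ 2 + berNorm k B ^ 2 + c + ber k (adjoint A * B) := by
    have := ber_nonneg k (adjoint A * B)
    positivity
  refine (Real.le_sqrt (berNorm_nonneg k _) hR).mp (berNorm_le k (fun lam mu => ?_)
    (Real.sqrt_nonneg _))
  refine Real.le_sqrt_of_sq_le ((norm_inner_add_apply_sq_le hk A B lam mu).trans ?_)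
  grw [h lam]

theorem berNorm_add_sq_le_half_ber (A B : H →L[ℂ] H) :
    berNorm k (A + B) ^ 2 ≤ berNorm k A ^ 2 + berNorm k B ^ 2
      + (1 / 2 : ℝ) * ber k (adjoint A * A + adjoint B * B) + ber k (adjoint A * B) := by
  refine berNorm_add_sq_le_of_norm_mul_le hk A B
    (mul_nonneg (by norm_num) (ber_nonneg k _)) fun lam => ?_
  have := norm_apply_sq_add_norm_apply_sq_le_ber hk A B lam
  nlinarith [sq_nonneg (‖A (k lam)‖ - ‖B (k lam)‖)]

end Berezin

theorem berNorm_add_sq_inequalities_general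
    {H : Type*} [NormedAddCommGroup H] [InnerProductSpace ℂ H] [CompleteSpace H]
    {Ω : Type*} (k : Ω → H) (hk : ∀ lam, ‖k lam‖ = 1)
    (A B : H →L[ℂ] H) :
    berNorm k (A + B) ^ 2 ≤
        berNorm k A ^ 2 + berNorm k B ^ 2
          + Real.sqrt (ber k (adjoint A * A)) * Real.sqrt (ber k (adjoint B * B))
          + ber k (adjoint A * B) ∧
      berNorm k (A + B) ^ 2 ≤
        berNorm k A ^ 2 + berNorm k B ^ 2
          + (1 / 2 : ℝ) * ber k (adjoint A * A + adjoint B * B)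
          + ber k (adjoint A * B) ∧
      berNorm k (A + B) ^ 2 ≤
        berNorm k A ^ 2 + berNorm k B ^ 2
          + (1 / 2 : ℝ) * ber k (A * adjoint A + B * adjoint B)
          + ber k (A * adjoint B) := by
  refine ⟨?_, berNorm_add_sq_le_half_ber hk A B, ?_⟩
  · refine berNorm_add_sq_le_of_norm_mul_le hk A B (by positivity) fun lam => ?_
    exact mul_le_mul (Real.le_sqrt_of_sq_le (norm_apply_sq_le_ber hk A lam))
      (Real.le_sqrt_of_sq_le (norm_apply_sq_le_ber hk B lam)) (norm_nonneg _) (Real.sqrt_nonneg _)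
  · have h := berNorm_add_sq_le_half_ber hk (adjoint A) (adjoint B)
    rwa [adjoint_adjoint, adjoint_adjoint, ← map_add, berNorm_adjoint hk, berNorm_adjoint hk,
      berNorm_adjoint hk] at h

theorem berNorm_add_sq_inequalities
    {H : Type*} [NormedAddCommGroup H] [InnerProductSpace ℂ H] [CompleteSpace H]
    {Ω : Type*} [Nonempty Ω] (k : Ω → H) (hk : ∀ lam, ‖k lam‖ = 1)
    (A B : H →L[ℂ] H) :
    berNorm k (A + B) ^ 2 ≤
        berNorm k A ^ 2 + berNorm k B ^ 2
          + Real.sqrt (ber k (adjoint A * A)) * Real.sqrt (ber k (adjoint B * B))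
          + ber k (adjoint A * B) ∧
      berNorm k (A + B) ^ 2 ≤
        berNorm k A ^ 2 + berNorm k B ^ 2
          + (1 / 2 : ℝ) * ber k (adjoint A * A + adjoint B * B)
          + ber k (adjoint A * B) ∧
      berNorm k (A + B) ^ 2 ≤
        berNorm k A ^ 2 + berNorm k B ^ 2
          + (1 / 2 : ℝ) * ber k (A * adjoint A + B * adjoint B)
          + ber k (A * adjoint B) :=
  berNorm_add_sq_inequalities_general k hk A B
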